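/- arXiv:1402.5297 — 2 statements merged into one kernel-verified Lean document; each statement's English description precedes it below -/
import Mathlib

section
/- Let the posterior density be p(u) ∝ exp(-E(u)) with E(u) = ½‖Ku - f‖²_{Σ⁻¹} + λJ(u), J convex and differentiable, E having a minimizer û_MAP, and suppose ∫∇p(u)du = 0 and all relevant integrals are finite. Then û_MAP minimizes the Bayes cost û ↦ ∫ (‖K(û-u)‖²_{Σ⁻¹} + 2λ D_J(û,u)) p(u) du, where D_J(û,u) = J(û) - J(u) - ⟨∇J(u), û - u⟩. -/
/-!
The Bayes cost integrand is `2 D_E(û, u)`, twice the Bregman distance of the energy `E` itself: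
the Bregman distance of the quadratic data term `½‖Ku - f‖²_S` is `½‖K(û - u)‖²_S`.
For fixed `u`, `D_E(v, u) - D_E(w, u) = E v - E w - ⟪∇E u, v - w⟫`, and for the Gibbs density
`∇p = -p ∇E`, so `∫ p ∇E = -∫ ∇p = 0`. Integrating against `p` therefore gives
`cost v - cost w = 2 (E v - E w)`, and a minimizer of `E` minimizes the cost.
-/

open RealInnerProductSpace MeasureTheory

section Bregman

variable {E : Type*} [NormedAddCommGroup E] [InnerProductSpace ℝ E] [CompleteSpace E]

noncomputable def bregman (φ : E → ℝ) (v u : E) : ℝ := φ v - φ u - ⟪gradient φ u, v - u⟫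

lemma bregman_sub_bregman (φ : E → ℝ) (v w u : E) :
    bregman φ v u - bregman φ w u = φ v - φ w - ⟪gradient φ u, v - w⟫ := by
  simp only [bregman, ← sub_sub_sub_cancel_right v w u, inner_sub_right]
  ring

theorem integral_bregman_mul_sub_integral_bregman_mul [MeasurableSpace E] {μ : Measure E}
    {φ p : E → ℝ} (hp : ∫ u, p u ∂μ = 1)
    (hpφ : Integrable (fun u => p u • gradient φ u) μ) (hpφ0 : ∫ u, p u • gradient φ u ∂μ = 0)
    {v w : E} (hv : Integrable (fun u => bregman φ v u * p u) μ)
    (hw : Integrable (fun u => bregman φ w u * p u) μ) :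
    ∫ u, bregman φ v u * p u ∂μ - ∫ u, bregman φ w u * p u ∂μ = φ v - φ w := by
  have hpint : Integrable p μ := .of_integral_ne_zero (by simp [hp])
  have hpt : (fun u => bregman φ v u * p u - bregman φ w u * p u)
      = fun u => (φ v - φ w) * p u - ⟪v - w, p u • gradient φ u⟫ := by
    ext u
    rw [← sub_mul, bregman_sub_bregman, real_inner_smul_right, real_inner_comm]
    ring
  rw [← integral_sub hv hw, hpt, integral_sub (hpint.const_mul _) (hpφ.const_inner _),
    integral_const_mul, integral_inner hpφ, hp, hpφ0, inner_zero_right]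
  ring

lemma gradient_const_mul_exp_neg {φ : E → ℝ} {u : E} (c : ℝ) (hφ : DifferentiableAt ℝ φ u) :
    gradient (fun u => c * Real.exp (-φ u)) u = -((c * Real.exp (-φ u)) • gradient φ u) := by
  apply HasGradientAt.gradient
  rw [hasGradientAt_iff_hasFDerivAt, map_neg, map_smul, toDual_gradient]
  refine ((hφ.hasFDerivAt.neg.exp).const_mul c).congr_fderiv ?_
  simp only [Pi.neg_apply, smul_neg, smul_smul]

lemma integral_smul_gradient_eq_neg_integral_gradient [MeasurableSpace E] {μ : Measure E}
    {φ p : E → ℝ} {c : ℝ} (hp : ∀ u, p u = c * Real.exp (-φ u)) (hφ : Differentiable ℝ φ) :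
    ∫ u, p u • gradient φ u ∂μ = -∫ u, gradient p u ∂μ := by
  rw [← integral_neg, funext hp]
  simp only [gradient_const_mul_exp_neg c (hφ _), neg_neg]

lemma measurable_gradient [MeasurableSpace E] [BorelSpace E] (φ : E → ℝ) :
    Measurable (gradient φ) :=
  (InnerProductSpace.toDual ℝ E).symm.continuous.measurable.comp (measurable_fderiv ℝ φ)

variable {F : Type*} [NormedAddCommGroup F] [InnerProductSpace ℝ F] [FiniteDimensional ℝ E]
  [FiniteDimensional ℝ F]

lemma hasGradientAt_half_inner_map_sub {K : E →ₗ[ℝ] F} {S : F →ₗ[ℝ] F} (hS : S.IsSymmetric)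
    (f : F) (u : E) :
    HasGradientAt (fun u => 1 / 2 * ⟪K u - f, S (K u - f)⟫) (K.adjoint (S (K u - f))) u := by
  rw [hasGradientAt_iff_hasFDerivAt]
  have hK : HasFDerivAt (fun v => K v - f) K.toContinuousLinearMap u :=
    K.toContinuousLinearMap.hasFDerivAt.sub_const f
  have hSK := S.toContinuousLinearMap.hasFDerivAt.comp u hK
  refine ((hK.inner ℝ hSK).const_mul (1 / 2 : ℝ)).congr_fderiv ?_
  ext h
  change 1 / 2 * (⟪K u - f, S (K h)⟫ + ⟪K h, S (K u - f)⟫) = ⟪K.adjoint (S (K u - f)), h⟫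
  rw [LinearMap.adjoint_inner_left, ← hS, real_inner_comm (K h)]
  ring

lemma hasGradientAt_half_inner_map_sub_add_const_mul {K : E →ₗ[ℝ] F} {S : F →ₗ[ℝ] F}
    (hS : S.IsSymmetric) (f : F) (lam : ℝ) {J : E → ℝ} {u : E} (hJ : DifferentiableAt ℝ J u) :
    HasGradientAt (fun u => 1 / 2 * ⟪K u - f, S (K u - f)⟫ + lam * J u)
      (K.adjoint (S (K u - f)) + lam • gradient J u) u := by
  rw [hasGradientAt_iff_hasFDerivAt, map_add, map_smul, toDual_gradient]
  exact ((hasGradientAt_half_inner_map_sub hS f u).hasFDerivAt).add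
    (hJ.hasFDerivAt.const_mul lam)

lemma bregman_half_inner_map_sub_add_const_mul {K : E →ₗ[ℝ] F} {S : F →ₗ[ℝ] F}
    (hS : S.IsSymmetric) (f : F) (lam : ℝ) {J : E → ℝ} {u : E} (hJ : DifferentiableAt ℝ J u)
    (v : E) :
    bregman (fun u => 1 / 2 * ⟪K u - f, S (K u - f)⟫ + lam * J u) v u
      = 1 / 2 * ⟪K (v - u), S (K (v - u))⟫ + lam * bregman J v u := by
  have hv : K v - f = (K u - f) + K (v - u) := by rw [map_sub]; abel
  simp only [bregman, (hasGradientAt_half_inner_map_sub_add_const_mul hS f lam hJ).gradient,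
    inner_add_left, real_inner_smul_left, LinearMap.adjoint_inner_left, hv, map_add,
    inner_add_right, ← hS (K u - f) (K (v - u)),
    real_inner_comm (K (v - u)) (S (K u - f))]
  ring

lemma integrable_smul_adjoint_add_smul_gradient [MeasurableSpace E] [BorelSpace E]
    {μ : Measure E} {p : E → ℝ} (K : E →ₗ[ℝ] F) (S : F →ₗ[ℝ] F) (f : F) (lam : ℝ) {J : E → ℝ}
    (hp : Integrable p μ) (hpu : Integrable (fun u => p u • u) μ)
    (hpJ : Integrable (fun u => ‖gradient J u‖ * p u) μ) :
    Integrable (fun u => p u • (K.adjoint (S (K u - f)) + lam • gradient J u)) μ := by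
  have hpgJ : Integrable (fun u => p u • gradient J u) μ :=
    hpJ.norm.mono' (hp.1.smul (measurable_gradient J).aestronglyMeasurable)
      (ae_of_all _ fun u => by simp [norm_smul, mul_comm])
  have hL := (K.adjoint ∘ₗ S ∘ₗ K).toContinuousLinearMap.integrable_comp hpu
  refine ((hL.sub (hp.smul_const (K.adjoint (S f)))).add (hpgJ.smul lam)).congr
    (ae_of_all _ fun u => ?_)
  simp [smul_add, smul_sub, smul_comm lam]

end Bregman

theorem map_minimizes_bregman_cost_general {n m : ℕ}
    (K : EuclideanSpace ℝ (Fin n) →ₗ[ℝ] EuclideanSpace ℝ (Fin m))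
    (S : EuclideanSpace ℝ (Fin m) →ₗ[ℝ] EuclideanSpace ℝ (Fin m))
    (hSsym : ∀ y z, ⟪S y, z⟫ = ⟪y, S z⟫)
    (f : EuclideanSpace ℝ (Fin m)) (lam : ℝ)
    (J : EuclideanSpace ℝ (Fin n) → ℝ)
    (hJC1 : ContDiff ℝ 1 J)
    -- the posterior energy and density
    (E : EuclideanSpace ℝ (Fin n) → ℝ)
    (hE : ∀ u, E u = (1/2) * ⟪K u - f, S (K u - f)⟫ + lam * J u)
    (Z : ℝ)
    (p : EuclideanSpace ℝ (Fin n) → ℝ)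
    (hp : ∀ u, p u = Z⁻¹ * Real.exp (-E u))
    (hprob : ∫ u, p u = 1)
    -- vanishing integral of the gradient of the density
    (hgradp : ∫ u, gradient p u = 0)
    -- finiteness of all relevant integrals
    (hmom1 : Integrable (fun u => p u • u))
    (hgJint : Integrable (fun u => ‖gradient J u‖ * p u))
    (hcost : ∀ uhat, Integrable (fun u =>
        (⟪K (uhat - u), S (K (uhat - u))⟫
          + 2 * lam * (J uhat - J u - ⟪gradient J u, uhat - u⟫)) * p u))
    -- the MAP estimate
    (uMAP : EuclideanSpace ℝ (Fin n)) (hMAP : ∀ u, E uMAP ≤ E u) :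
    ∀ uhat : EuclideanSpace ℝ (Fin n),
      (∫ u, (⟪K (uMAP - u), S (K (uMAP - u))⟫
          + 2 * lam * (J uMAP - J u - ⟪gradient J u, uMAP - u⟫)) * p u)
        ≤ ∫ u, (⟪K (uhat - u), S (K (uhat - u))⟫
          + 2 * lam * (J uhat - J u - ⟪gradient J u, uhat - u⟫)) * p u := by
  have hEfun : E = fun u => 1 / 2 * ⟪K u - f, S (K u - f)⟫ + lam * J u := funext hE
  have hJ : Differentiable ℝ J := hJC1.differentiable one_ne_zero
  have hEgrad : ∀ u, HasGradientAt E (K.adjoint (S (K u - f)) + lam • gradient J u) u :=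
    fun u => hEfun ▸ hasGradientAt_half_inner_map_sub_add_const_mul hSsym f lam (hJ u)
  have hcost_eq : ∀ v u, (⟪K (v - u), S (K (v - u))⟫
      + 2 * lam * (J v - J u - ⟪gradient J u, v - u⟫)) * p u = 2 * (bregman E v u * p u) := by
    intro v u
    rw [hEfun, bregman_half_inner_map_sub_add_const_mul hSsym f lam (hJ u), bregman]
    ring
  have hbregman_int : ∀ v, Integrable (fun u => bregman E v u * p u) :=
    fun v => ((hcost v).const_mul (1 / 2)).congr (ae_of_all _ fun u => by
      simp only [hcost_eq]; ring)
  have hpint : Integrable p := .of_integral_ne_zero (by simp [hprob])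
  have hpgradE : Integrable (fun u => p u • gradient E u) := by
    simp only [fun u => (hEgrad u).gradient]
    exact integrable_smul_adjoint_add_smul_gradient K S f lam hpint hmom1 hgJint
  have hpgradE0 : ∫ u, p u • gradient E u = 0 := by
    rw [integral_smul_gradient_eq_neg_integral_gradient hp fun u => (hEgrad u).differentiableAt,
      hgradp, neg_zero]
  intro uhat
  have key := integral_bregman_mul_sub_integral_bregman_mul hprob hpgradE hpgradE0
    (hbregman_int uhat) (hbregman_int uMAP)
  simp only [hcost_eq, integral_const_mul]
  linarith [hMAP uhat]

/-- The MAP estimate minimizes the Bregman-distance Bayes cost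
`û ↦ ∫ (‖K(û-u)‖²_{Σ⁻¹} + 2λ D_J(û,u)) p(u) du`, where the weighted norm is
realized via the symmetric positive definite map `S = Σ⁻¹`. -/
theorem map_minimizes_bregman_cost {n m : ℕ}
    (K : EuclideanSpace ℝ (Fin n) →ₗ[ℝ] EuclideanSpace ℝ (Fin m))
    (S : EuclideanSpace ℝ (Fin m) →ₗ[ℝ] EuclideanSpace ℝ (Fin m))
    (hSsym : ∀ y z, ⟪S y, z⟫ = ⟪y, S z⟫)
    (hSpos : ∀ y, y ≠ 0 → 0 < ⟪y, S y⟫)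
    (f : EuclideanSpace ℝ (Fin m)) (lam : ℝ) (hlam : 0 < lam)
    (J : EuclideanSpace ℝ (Fin n) → ℝ)
    (hJconv : ConvexOn ℝ Set.univ J) (hJC1 : ContDiff ℝ 1 J)
    -- the posterior energy and density
    (E : EuclideanSpace ℝ (Fin n) → ℝ)
    (hE : ∀ u, E u = (1/2) * ⟪K u - f, S (K u - f)⟫ + lam * J u)
    (Z : ℝ) (hZ : 0 < Z)
    (p : EuclideanSpace ℝ (Fin n) → ℝ)
    (hp : ∀ u, p u = Z⁻¹ * Real.exp (-E u))
    (hprob : ∫ u, p u = 1)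
    -- vanishing integral of the gradient of the density
    (hgradp : ∫ u, gradient p u = 0)
    -- finiteness of all relevant integrals
    (hmom2 : Integrable (fun u => ‖u‖^2 * p u))
    (hmom1 : Integrable (fun u => p u • u))
    (hJint : Integrable (fun u => |J u| * p u))
    (hgJint : Integrable (fun u => ‖gradient J u‖ * p u))
    (hcost : ∀ uhat, Integrable (fun u =>
        (⟪K (uhat - u), S (K (uhat - u))⟫
          + 2 * lam * (J uhat - J u - ⟪gradient J u, uhat - u⟫)) * p u))
    -- the MAP estimate
    (uMAP : EuclideanSpace ℝ (Fin n)) (hMAP : ∀ u, E uMAP ≤ E u) :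
    ∀ uhat : EuclideanSpace ℝ (Fin n),
      (∫ u, (⟪K (uMAP - u), S (K (uMAP - u))⟫
          + 2 * lam * (J uMAP - J u - ⟪gradient J u, uMAP - u⟫)) * p u)
        ≤ ∫ u, (⟪K (uhat - u), S (K (uhat - u))⟫
          + 2 * lam * (J uhat - J u - ⟪gradient J u, uhat - u⟫)) * p u :=
  map_minimizes_bregman_cost_general K S hSsym f lam J hJC1 E hE Z p hp hprob hgradp hmom1 hgJint
    hcost uMAP hMAP
end

section
/- MAP outperforms CM in expected Bregman distance: suppose for all β > 0 the point a minimizes û ↦ ∫(‖K(û-u)‖²_{Σ⁻¹} + 2λD(û,u) + β‖L(û-u)‖²)dμ(u), while b minimizes û ↦ ∫(‖K(û-u)‖²_{Σ⁻¹} + β‖L(û-u)‖² )dμ(u) for all β > 0 (with L regular). Then ∫D(a,u)dμ(u) ≤ ∫D(b,u)dμ(u). -/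
open RealInnerProductSpace MeasureTheory

/-- MAP outperforms CM in expected Bregman distance: if `a` minimizes the
Bregman-augmented Bayes cost for every `β > 0` and `b` minimizes the
least-squares Bayes cost for every `β > 0`, then
`∫ D(a,u) dμ ≤ ∫ D(b,u) dμ`. -/
theorem map_bregman_optimal {n m : ℕ}
    (μ : Measure (EuclideanSpace ℝ (Fin n))) [IsProbabilityMeasure μ]
    (K : EuclideanSpace ℝ (Fin n) →ₗ[ℝ] EuclideanSpace ℝ (Fin m))
    (S : EuclideanSpace ℝ (Fin m) →ₗ[ℝ] EuclideanSpace ℝ (Fin m))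
    (hSsym : ∀ y z, ⟪S y, z⟫ = ⟪y, S z⟫)
    (hSpos : ∀ y, y ≠ 0 → 0 < ⟪y, S y⟫)
    (L : EuclideanSpace ℝ (Fin n) →ₗ[ℝ] EuclideanSpace ℝ (Fin n))
    (hL : Function.Injective L)
    (lam : ℝ) (hlam : 0 < lam)
    (D : EuclideanSpace ℝ (Fin n) → EuclideanSpace ℝ (Fin n) → ℝ)
    (hDconv : ∀ᵐ u ∂μ, ConvexOn ℝ Set.univ (fun x => D x u))
    (hDnonneg : ∀ᵐ u ∂μ, ∀ x, 0 ≤ D x u)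
    (hDint : ∀ x, Integrable (fun u => D x u) μ)
    (hKint : ∀ x, Integrable (fun u => ⟪K (x - u), S (K (x - u))⟫) μ)
    (hLint : ∀ x, Integrable (fun u => ‖L (x - u)‖^2) μ)
    (a b : EuclideanSpace ℝ (Fin n))
    (ha : ∀ β : ℝ, 0 < β → ∀ uhat,
      (∫ u, (⟪K (a - u), S (K (a - u))⟫ + 2 * lam * D a u
          + β * ‖L (a - u)‖^2) ∂μ)
        ≤ ∫ u, (⟪K (uhat - u), S (K (uhat - u))⟫ + 2 * lam * D uhat u
          + β * ‖L (uhat - u)‖^2) ∂μ)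
    (hb : ∀ β : ℝ, 0 < β → ∀ uhat,
      (∫ u, (⟪K (b - u), S (K (b - u))⟫ + β * ‖L (b - u)‖^2) ∂μ)
        ≤ ∫ u, (⟪K (uhat - u), S (K (uhat - u))⟫ + β * ‖L (uhat - u)‖^2) ∂μ) :
    ∫ u, D a u ∂μ ≤ ∫ u, D b u ∂μ := by
  have split1 : ∀ x : EuclideanSpace ℝ (Fin n),
      (∫ u, (⟪K (x - u), S (K (x - u))⟫ + 2 * lam * D x u
          + (1:ℝ) * ‖L (x - u)‖^2) ∂μ)
      = (∫ u, ⟪K (x - u), S (K (x - u))⟫ ∂μ)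
        + 2 * lam * (∫ u, D x u ∂μ) + (∫ u, ‖L (x - u)‖^2 ∂μ) := by
    intro x
    have hD' : Integrable (fun u => 2 * lam * D x u) μ := (hDint x).const_mul _
    have hf : Integrable (fun u => ⟪K (x - u), S (K (x - u))⟫ + 2 * lam * D x u) μ :=
      (hKint x).add hD'
    have hL' : Integrable (fun u => (1:ℝ) * ‖L (x - u)‖^2) μ := (hLint x).const_mul _
    rw [integral_add hf hL', integral_add (hKint x) hD', integral_const_mul]
    simp [one_mul]
  have split2 : ∀ x : EuclideanSpace ℝ (Fin n),
      (∫ u, (⟪K (x - u), S (K (x - u))⟫ + (1:ℝ) * ‖L (x - u)‖^2) ∂μ)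
      = (∫ u, ⟪K (x - u), S (K (x - u))⟫ ∂μ) + (∫ u, ‖L (x - u)‖^2 ∂μ) := by
    intro x
    have hL' : Integrable (fun u => (1:ℝ) * ‖L (x - u)‖^2) μ := (hLint x).const_mul _
    rw [integral_add (hKint x) hL']
    simp [one_mul]
  have h1 := ha 1 one_pos b
  have h2 := hb 1 one_pos a
  rw [split1 a, split1 b] at h1
  rw [split2 b, split2 a] at h2
  have key : 2 * lam * (∫ u, D a u ∂μ) ≤ 2 * lam * (∫ u, D b u ∂μ) := by linarith
  exact le_of_mul_le_mul_left key (by linarith)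
end
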